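/- Let n ≥ 2 and fix two distinct card labels a and b. For a deck of n cards after t inverse riffle shuffles, starting from any fixed order, the total variation distance between the distribution of the indicator of the event 'card a is above card b' and the uniform distribution on {true, false} is at most 1/2^t. -/

import Mathlib

open scoped Classical

/-- Total variation distance between two probability distributions on a finite type. -/
noncomputable def tvDist {Ω : Type*} [Fintype Ω] (μ ν : PMF Ω) : ℝ :=
  (1 / 2) * ∑ a, |(μ a).toReal - (ν a).toReal|

/-- The value of a bit string, reading the first coordinate as most significant (so comparison of
values is lexicographic comparison of strings). -/
def strVal (t : ℕ) (s : Fin t → Bool) : ℕ :=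
  ∑ i : Fin t, if s i then 2 ^ (t - 1 - (i : ℕ)) else 0

/-- The deck obtained from the deck order `σ₀` (where `σ₀ p` is the label of the card in
position `p`, position `0` being the top) after `t` inverse riffle shuffles realised by the bit
strings `s`: the card with label `c` is assigned the string `s c` and the deck is sorted stably
by these strings (cards with lexicographically smaller strings nearer the top, cards with equal
strings keeping their original relative order). -/
noncomputable def riffleResult {n : ℕ} (t : ℕ) (σ₀ : Equiv.Perm (Fin n))
    (s : Fin n → Fin t → Bool) : Equiv.Perm (Fin n) :=
  (Tuple.sort (fun p => strVal t (s (σ₀ p)))).trans σ₀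

lemma strVal_injective (t : ℕ) : Function.Injective (strVal t) := by
  have hφ : Function.Injective (fun i : Fin t => t - 1 - (i : ℕ)) := by
    intro i j hij
    have hi : (i : ℕ) ≤ t - 1 := Nat.le_sub_one_of_lt i.2
    have hj : (j : ℕ) ≤ t - 1 := Nat.le_sub_one_of_lt j.2
    have : t - 1 - (t - 1 - (i : ℕ)) = t - 1 - (t - 1 - (j : ℕ)) := by
      simp only at hij; rw [hij]
    rwa [Nat.sub_sub_self hi, Nat.sub_sub_self hj, ← Fin.ext_iff] at this
  have key : ∀ s : Fin t → Bool, strVal t s =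
      ∑ k ∈ (Finset.univ.filter fun i : Fin t => s i = true).image
        (fun i : Fin t => t - 1 - (i : ℕ)), 2 ^ k := by
    intro s
    rw [Finset.sum_image (fun i _ j _ h => hφ h), strVal, Finset.sum_filter]
  intro s s' h
  rw [key, key] at h
  have h2 := Finset.geomSum_injective (le_refl 2) h
  have h3 := Finset.image_injective hφ h2
  funext i
  have := Finset.ext_iff.mp h3 i
  simpa using this

lemma sort_symm_lt_iff {m : ℕ} {α : Type*} [LinearOrder α] (f : Fin m → α) (p q : Fin m) :
    (Tuple.sort f).symm p < (Tuple.sort f).symm q ↔ f p < f q ∨ (f p = f q ∧ p < q) := by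
  obtain ⟨hmono, hstab⟩ := (Tuple.eq_sort_iff (f := f) (σ := Tuple.sort f)).mp rfl
  set σ := Tuple.sort f with hσ
  have hp : σ (σ.symm p) = p := σ.apply_symm_apply p
  have hq : σ (σ.symm q) = q := σ.apply_symm_apply q
  constructor
  · intro h
    rcases lt_or_eq_of_le (hmono h.le) with h' | h'
    · left; rwa [Function.comp_apply, Function.comp_apply, hp, hq] at h'
    · right
      have h'' : f (σ (σ.symm p)) = f (σ (σ.symm q)) := h'
      rw [hp, hq] at h''
      refine ⟨h'', ?_⟩
      have := hstab _ _ h (by rw [hp, hq]; exact h'')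
      rwa [hp, hq] at this
  · intro h
    rcases lt_trichotomy (σ.symm p) (σ.symm q) with h' | h' | h'
    · exact h'
    · exfalso
      have : p = q := by rw [← hp, ← hq, h']
      rcases h with h | h
      · exact absurd (this ▸ h) (lt_irrefl _)
      · exact absurd (this ▸ h.2) (lt_irrefl _)
    · exfalso
      have hle : f q ≤ f p := by
        have := hmono h'.le
        rwa [Function.comp_apply, Function.comp_apply, hp, hq] at this
      rcases h with h | h
      · exact absurd h (not_lt.mpr hle)
      · have := hstab _ _ h' (by rw [hp, hq]; exact h.1.symm)
        rw [hp, hq] at this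
        exact absurd h.2 (not_lt.mpr this.le)

/-- After `t` inverse riffle shuffles from any fixed order, the indicator of the event "card `a`
is above card `b`" is within `1/2^t` of uniform on `{true, false}` in total variation. -/
theorem riffle_relative_order_of_two_cards (n : ℕ) (hn : 2 ≤ n) (a b : Fin n) (hab : a ≠ b)
    (σ₀ : Equiv.Perm (Fin n)) (t : ℕ) :
    tvDist ((PMF.uniformOfFintype (Fin n → Fin t → Bool)).map
        (fun s => decide ((riffleResult t σ₀ s)⁻¹ a < (riffleResult t σ₀ s)⁻¹ b)))
      (PMF.uniformOfFintype Bool) ≤ 1 / 2 ^ t := by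
  set F := (Fin t → Bool)
  -- the event depends only on (s a, s b)
  set g : F × F → Bool := fun p =>
    decide (strVal t p.1 < strVal t p.2 ∨ (p.1 = p.2 ∧ σ₀⁻¹ a < σ₀⁻¹ b)) with hg
  have hfun : (fun s : Fin n → F =>
      decide ((riffleResult t σ₀ s)⁻¹ a < (riffleResult t σ₀ s)⁻¹ b))
      = fun s => g (s a, s b) := by
    funext s
    have key : (riffleResult t σ₀ s)⁻¹ a < (riffleResult t σ₀ s)⁻¹ b ↔
        (strVal t (s a) < strVal t (s b) ∨ (s a = s b ∧ σ₀⁻¹ a < σ₀⁻¹ b)) := by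
      set f : Fin n → ℕ := fun p => strVal t (s (σ₀ p)) with hf
      have h1 : (riffleResult t σ₀ s)⁻¹ a = (Tuple.sort f).symm (σ₀⁻¹ a) := rfl
      have h2 : (riffleResult t σ₀ s)⁻¹ b = (Tuple.sort f).symm (σ₀⁻¹ b) := rfl
      rw [h1, h2, sort_symm_lt_iff]
      have ha : f (σ₀⁻¹ a) = strVal t (s a) := by simp [hf]
      have hb : f (σ₀⁻¹ b) = strVal t (s b) := by simp [hf]
      rw [ha, hb]
      constructor
      · rintro (h | ⟨h, h'⟩)
        · exact Or.inl h
        · exact Or.inr ⟨strVal_injective t h, h'⟩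
      · rintro (h | ⟨h, h'⟩)
        · exact Or.inl h
        · exact Or.inr ⟨by rw [h], h'⟩
    simp only [hg, key]
  rw [hfun]
  -- the remaining spectator cards
  set R := {j : {j : Fin n // j ≠ a} // j ≠ (⟨b, Ne.symm hab⟩ : {j : Fin n // j ≠ a})} with hR
  set e : (Fin n → F) ≃ F × (F × (R → F)) :=
    (Equiv.funSplitAt a F).trans ((Equiv.refl F).prodCongr (Equiv.funSplitAt
      (⟨b, Ne.symm hab⟩ : {j : Fin n // j ≠ a}) F)) with he
  have he1 : ∀ s : Fin n → F, (e s).1 = s a := fun s => rfl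
  have he2 : ∀ s : Fin n → F, (e s).2.1 = s b := fun s => rfl
  have ecard : ∀ x : Bool, Fintype.card {s : Fin n → F // g (s a, s b) = x}
      = Fintype.card {p : F × F // g p = x} * Fintype.card (R → F) := by
    intro x
    have e1 : {s : Fin n → F // g (s a, s b) = x} ≃ {y : F × (F × (R → F)) // g (y.1, y.2.1) = x} :=
      e.subtypeEquiv (fun s => by rw [he1, he2])
    have e2 : {y : F × (F × (R → F)) // g (y.1, y.2.1) = x} ≃
        {z : (F × F) × (R → F) // g z.1 = x} :=
      (Equiv.prodAssoc F F (R → F)).symm.subtypeEquiv (fun y => by rfl)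
    have e3 : {z : (F × F) × (R → F) // g z.1 = x} ≃ {p : F × F // g p = x} × (R → F) :=
      Equiv.prodSubtypeFstEquivSubtypeProd (p := fun q : F × F => g q = x)
    rw [Fintype.card_congr (e1.trans (e2.trans e3)), Fintype.card_prod]
  have etot : Fintype.card (Fin n → F) = Fintype.card (F × F) * Fintype.card (R → F) := by
    rw [Fintype.card_congr (e.trans (Equiv.prodAssoc F F (R → F)).symm), Fintype.card_prod]
  have hF : Fintype.card F = 2 ^ t := by
    simp [F, Fintype.card_fun]
  set M := Fintype.card (R → F) with hM
  have hM0 : 0 < M := Fintype.card_pos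
  have hμ : ∀ x : Bool,
      (((PMF.uniformOfFintype (Fin n → F)).map (fun s => g (s a, s b))) x).toReal
        = ((Finset.univ.filter fun p : F × F => g p = x).card : ℝ) / ((2 : ℝ) ^ t) ^ 2 := by
    intro x
    rw [PMF.map_apply, tsum_fintype]
    simp only [PMF.uniformOfFintype_apply]
    rw [← Finset.sum_filter, Finset.sum_const]
    have hfilt : (Finset.univ.filter fun s : Fin n → F => x = g (s a, s b)).card
        = (Finset.univ.filter fun p : F × F => g p = x).card * M := by
      have h0 : (Finset.univ.filter fun s : Fin n → F => x = g (s a, s b))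
          = (Finset.univ.filter fun s : Fin n → F => g (s a, s b) = x) := by
        apply Finset.filter_congr; intro s _; simp [eq_comm]
      rw [h0, ← Fintype.card_subtype, ecard x, Fintype.card_subtype]
    rw [hfilt, nsmul_eq_mul, ENNReal.toReal_mul, ENNReal.toReal_inv, ENNReal.toReal_natCast,
      ENNReal.toReal_natCast, etot, Fintype.card_prod, hF]
    have h2 : (0:ℝ) < 2 ^ t := by positivity
    have hMr : (0:ℝ) < M := by exact_mod_cast hM0
    push_cast
    field_simp
  -- pair counting
  set L := (Finset.univ.filter fun p : F × F => strVal t p.1 < strVal t p.2).card with hL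
  have hsym : L = (Finset.univ.filter fun p : F × F => strVal t p.2 < strVal t p.1).card := by
    rw [hL, ← Fintype.card_subtype, ← Fintype.card_subtype]
    exact Fintype.card_congr
      ⟨fun p => ⟨p.1.swap, p.2⟩, fun p => ⟨p.1.swap, p.2⟩,
        fun p => by simp, fun p => by simp⟩
  have hdiag : (Finset.univ.filter fun p : F × F => p.1 = p.2).card = 2 ^ t := by
    rw [← Fintype.card_subtype, ← hF]
    exact Fintype.card_congr
      ⟨fun p => p.1.1, fun u => ⟨(u, u), rfl⟩,
        fun p => by
          rcases p with ⟨⟨u, v⟩, h⟩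
          simp only at h
          subst h
          rfl,
        fun u => rfl⟩
  have hpart : 2 ^ t * 2 ^ t = L + (2 ^ t + L) := by
    have h1 := Finset.card_filter_add_card_filter_not
      (s := (Finset.univ : Finset (F × F)))
      (p := fun p => strVal t p.1 < strVal t p.2)
    have h2 : (Finset.univ.filter fun p : F × F => ¬ strVal t p.1 < strVal t p.2)
        = (Finset.univ.filter fun p : F × F => p.1 = p.2)
          ∪ (Finset.univ.filter fun p : F × F => strVal t p.2 < strVal t p.1) := by
      rw [← Finset.filter_or]
      apply Finset.filter_congr
      intro p _
      simp only [not_lt, le_iff_lt_or_eq, eq_comm (a := strVal t p.2)]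
      constructor
      · rintro (h | h)
        · exact Or.inr h
        · exact Or.inl (strVal_injective t h)
      · rintro (h | h)
        · exact Or.inr (by rw [h])
        · exact Or.inl h
    have hdisj : Disjoint (Finset.univ.filter fun p : F × F => p.1 = p.2)
        (Finset.univ.filter fun p : F × F => strVal t p.2 < strVal t p.1) := by
      rw [Finset.disjoint_filter]
      intro p _ h1 h2
      rw [h1] at h2
      exact lt_irrefl _ h2
    rw [h2, Finset.card_union_of_disjoint hdisj, hdiag, ← hsym, ← hL] at h1
    rw [h1, Finset.card_univ, Fintype.card_prod, hF]
  have hKsum : (Finset.univ.filter fun p : F × F => g p = true).card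
      + (Finset.univ.filter fun p : F × F => g p = false).card = 2 ^ t * 2 ^ t := by
    have h1 := Finset.card_filter_add_card_filter_not
      (s := (Finset.univ : Finset (F × F))) (p := fun p => g p = true)
    have h2 : (Finset.univ.filter fun p : F × F => ¬ g p = true)
        = (Finset.univ.filter fun p : F × F => g p = false) := by
      apply Finset.filter_congr; intro p _; simp
    rw [h2] at h1
    rw [h1, Finset.card_univ, Fintype.card_prod, hF]
  have hdisj2 : Disjoint (Finset.univ.filter fun p : F × F => strVal t p.1 < strVal t p.2)
      (Finset.univ.filter fun p : F × F => p.1 = p.2) := by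
    rw [Finset.disjoint_filter]
    intro p _ h1 h2
    rw [h2] at h1
    exact lt_irrefl _ h1
  -- the two filter cardinalities
  have hunif : ∀ x : Bool, ((PMF.uniformOfFintype Bool) x).toReal = 2⁻¹ := by
    intro x
    rw [PMF.uniformOfFintype_apply]
    simp [ENNReal.toReal_inv]
  have hT : (0:ℝ) < 2 ^ t := by positivity
  have hx : 2 * (L:ℝ) + 2 ^ t = 2 ^ t * 2 ^ t := by
    exact_mod_cast (by omega : 2 * L + 2 ^ t = 2 ^ t * 2 ^ t)
  have e1 : ((L:ℝ) + 2 ^ t) / ((2:ℝ) ^ t) ^ 2 - 2⁻¹ = (2 * (2:ℝ) ^ t)⁻¹ := by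
    field_simp
    nlinarith [hx]
  have e2 : ((L:ℝ)) / ((2:ℝ) ^ t) ^ 2 - 2⁻¹ = -(2 * (2:ℝ) ^ t)⁻¹ := by
    field_simp
    nlinarith [hx]
  have hfin : (2 * (2:ℝ) ^ t)⁻¹ ≤ 1 / 2 ^ t := by
    rw [one_div]
    exact inv_anti₀ hT (by linarith)
  by_cases hc : σ₀⁻¹ a < σ₀⁻¹ b
  · have hKt : (Finset.univ.filter fun p : F × F => g p = true).card = L + 2 ^ t := by
      have h0 : (Finset.univ.filter fun p : F × F => g p = true)
          = (Finset.univ.filter fun p : F × F => strVal t p.1 < strVal t p.2)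
            ∪ (Finset.univ.filter fun p : F × F => p.1 = p.2) := by
        rw [← Finset.filter_or]
        apply Finset.filter_congr
        intro p _
        simp only [hg, decide_eq_true_iff]
        constructor
        · rintro (h | ⟨h, _⟩)
          exacts [Or.inl h, Or.inr h]
        · rintro (h | h)
          exacts [Or.inl h, Or.inr ⟨h, hc⟩]
      rw [h0, Finset.card_union_of_disjoint hdisj2, ← hL, hdiag]
    have hKf : (Finset.univ.filter fun p : F × F => g p = false).card = L := by omega
    simp only [tvDist]
    rw [Fintype.sum_bool, hμ true, hμ false, hKt, hKf, hunif, hunif]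
    push_cast
    rw [e1, e2, abs_neg, abs_of_nonneg (by positivity)]
    calc (1:ℝ)/2 * ((2 * (2:ℝ) ^ t)⁻¹ + (2 * (2:ℝ) ^ t)⁻¹) = (2 * (2:ℝ) ^ t)⁻¹ := by ring
    _ ≤ 1 / 2 ^ t := hfin
  · have hKt : (Finset.univ.filter fun p : F × F => g p = true).card = L := by
      have h0 : (Finset.univ.filter fun p : F × F => g p = true)
          = (Finset.univ.filter fun p : F × F => strVal t p.1 < strVal t p.2) := by
        apply Finset.filter_congr
        intro p _
        simp only [hg, decide_eq_true_iff]
        constructor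
        · rintro (h | ⟨h, h'⟩)
          · exact h
          · exact absurd h' hc
        · exact fun h => Or.inl h
      rw [h0, ← hL]
    have hKf : (Finset.univ.filter fun p : F × F => g p = false).card = L + 2 ^ t := by omega
    simp only [tvDist]
    rw [Fintype.sum_bool, hμ true, hμ false, hKt, hKf, hunif, hunif]
    push_cast
    rw [e1, e2, abs_neg, abs_of_nonneg (by positivity)]
    calc (1:ℝ)/2 * ((2 * (2:ℝ) ^ t)⁻¹ + (2 * (2:ℝ) ^ t)⁻¹) = (2 * (2:ℝ) ^ t)⁻¹ := by ring
    _ ≤ 1 / 2 ^ t := hfin
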